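/- Let Δ ⊂ ℝ^d be a d-dimensional lattice polytope with Δ^{FI} = {0}. Then [[[Δ*]*]*] = [Δ*]; consequently, both [Δ*] and [[Δ*]*] are pseudoreflexive polytopes. -/
import Mathlib


open Finset Pointwise MeasureTheory
noncomputable section

variable {d : ℕ}

/-- Standard pairing on ℝ^d. -/
def pairR (x y : Fin d → ℝ) : ℝ := ∑ i, x i * y i

/-- Embedding of ℤ^d into ℝ^d. -/
def toR (n : Fin d → ℤ) : Fin d → ℝ := fun i => (n i : ℝ)

/-- A point of ℝ^d with integer coordinates. -/
def IsLatticePoint (x : Fin d → ℝ) : Prop := ∀ i, ∃ z : ℤ, x i = (z : ℝ)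

/-- ord_Δ(y) = min_{x ∈ Δ} ⟨x, y⟩. -/
def ordP (Δ : Set (Fin d → ℝ)) (y : Fin d → ℝ) : ℝ := sInf ((fun x => pairR x y) '' Δ)

/-- The Fine interior of Δ. -/
def fineInterior (Δ : Set (Fin d → ℝ)) : Set (Fin d → ℝ) :=
  {x | ∀ n : Fin d → ℤ, n ≠ 0 → ordP Δ (toR n) + 1 ≤ pairR x (toR n)}

/-- A lattice polytope: the convex hull of finitely many lattice points. -/
def IsLatticePolytope (Δ : Set (Fin d → ℝ)) : Prop :=
  ∃ S : Finset (Fin d → ℤ), Δ = convexHull ℝ (toR '' (S : Set (Fin d → ℤ)))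

/-- The polar set Δ* = {y : ⟨x,y⟩ ≥ -1 for all x ∈ Δ}. -/
def polarSet (Δ : Set (Fin d → ℝ)) : Set (Fin d → ℝ) :=
  {y | ∀ x ∈ Δ, -1 ≤ pairR x y}

/-- [P] = convex hull of the lattice points of P. -/
def latticeHull (P : Set (Fin d → ℝ)) : Set (Fin d → ℝ) :=
  convexHull ℝ {x ∈ P | IsLatticePoint x}

/-- Pseudoreflexive polytope: Fine interior {0} and Δ = [[Δ*]*]. -/
def IsPseudoreflexive (Δ : Set (Fin d → ℝ)) : Prop :=
  IsLatticePolytope Δ ∧ fineInterior Δ = {0} ∧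
    Δ = latticeHull (polarSet (latticeHull (polarSet Δ)))

/-- (Exposed) face of Δ cut out by a supporting linear functional. -/
def IsFaceOf (Δ F : Set (Fin d → ℝ)) : Prop :=
  ∃ y : Fin d → ℝ, F = {x ∈ Δ | pairR x y = ordP Δ y}

/-- Dimension of a subset of ℝ^d. -/
def dimSet (S : Set (Fin d → ℝ)) : ℕ := Module.finrank ℝ ↥(vectorSpan ℝ S)

/-- The face of the polar polytope dual to a face F of Δ. -/
def dualFace (Δ F : Set (Fin d → ℝ)) : Set (Fin d → ℝ) :=
  {y ∈ polarSet Δ | ∀ x ∈ F, pairR x y = -1}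

/-- The cone ℝ_{≥0}·Θ over a set Θ. -/
def coneOver (Θ : Set (Fin d → ℝ)) : Set (Fin d → ℝ) :=
  {x | ∃ c : ℝ, 0 ≤ c ∧ ∃ p ∈ Θ, x = c • p}

/-- A face Θ is ordinary if every lattice point of ℝ_{≥0}Θ lies in some dilate lΘ. -/
def IsOrdinaryFace (Θ : Set (Fin d → ℝ)) : Prop :=
  ∀ n : Fin d → ℤ, toR n ∈ coneOver Θ → ∃ l : ℕ, toR n ∈ (l : ℝ) • Θ

/-- Facet: a face of dimension d-1. -/
def IsFacet (Δ Θ : Set (Fin d → ℝ)) : Prop :=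
  IsFaceOf Δ Θ ∧ dimSet Θ + 1 = d

/-! ### Auxiliary lemmas -/

section Aux

lemma pairR_comm (x y : Fin d → ℝ) : pairR x y = pairR y x :=
  Finset.sum_congr rfl fun i _ => mul_comm _ _

lemma pairR_zero_left (y : Fin d → ℝ) : pairR 0 y = 0 := by simp [pairR]

lemma pairR_zero_right (x : Fin d → ℝ) : pairR x 0 = 0 := by simp [pairR]

lemma pairR_add_left (x x' y : Fin d → ℝ) : pairR (x + x') y = pairR x y + pairR x' y := by
  simp [pairR, add_mul, Finset.sum_add_distrib]

lemma pairR_smul_left (c : ℝ) (x y : Fin d → ℝ) : pairR (c • x) y = c * pairR x y := by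
  simp [pairR, Finset.mul_sum, mul_assoc]

lemma pairR_smul_right (c : ℝ) (x y : Fin d → ℝ) : pairR x (c • y) = c * pairR x y := by
  rw [pairR_comm, pairR_smul_left, pairR_comm]

lemma isLinearMap_pairR_left (y : Fin d → ℝ) : IsLinearMap ℝ (fun x => pairR x y) := by
  constructor
  · intro x x'; exact pairR_add_left x x' y
  · intro c x; rw [smul_eq_mul]; exact pairR_smul_left c x y

lemma isLinearMap_pairR_right (x : Fin d → ℝ) : IsLinearMap ℝ (fun y => pairR x y) := by
  constructor
  · intro y y'; rw [pairR_comm, pairR_add_left, pairR_comm y, pairR_comm y']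
  · intro c y; rw [smul_eq_mul, pairR_comm, pairR_smul_left, pairR_comm]

lemma toR_zero : toR (0 : Fin d → ℤ) = 0 := by funext i; simp [toR]

lemma toR_eq_zero_iff {n : Fin d → ℤ} : toR n = 0 ↔ n = 0 := by
  constructor
  · intro h; funext i
    have := congrFun h i
    simpa [toR] using this
  · rintro rfl; exact toR_zero

lemma isLatticePoint_toR (n : Fin d → ℤ) : IsLatticePoint (toR n) := fun i => ⟨n i, rfl⟩

lemma isLatticePoint_zero : IsLatticePoint (0 : Fin d → ℝ) := fun _ => ⟨0, by simp⟩

lemma isLatticePoint_iff {x : Fin d → ℝ} : IsLatticePoint x ↔ ∃ n : Fin d → ℤ, x = toR n := by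
  constructor
  · intro h
    choose n hn using h
    exact ⟨n, funext hn⟩
  · rintro ⟨n, rfl⟩; exact isLatticePoint_toR n

lemma pairR_toR_toR (m n : Fin d → ℤ) :
    pairR (toR m) (toR n) = ((∑ i, m i * n i : ℤ) : ℝ) := by
  unfold pairR toR; push_cast; rfl

lemma convex_polarSet (A : Set (Fin d → ℝ)) : Convex ℝ (polarSet A) := by
  intro y₁ hy₁ y₂ hy₂ a b ha hb hab
  intro x hx
  have h1 := hy₁ x hx
  have h2 := hy₂ x hx
  have : pairR x (a • y₁ + b • y₂) = a * pairR x y₁ + b * pairR x y₂ := by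
    rw [pairR_comm, pairR_add_left, pairR_smul_left, pairR_smul_left, pairR_comm y₁,
      pairR_comm y₂]
  rw [this]
  nlinarith

lemma polar_antitone {A B : Set (Fin d → ℝ)} (h : A ⊆ B) : polarSet B ⊆ polarSet A :=
  fun _ hy x hx => hy x (h hx)

lemma subset_bipolar (A : Set (Fin d → ℝ)) : A ⊆ polarSet (polarSet A) := by
  intro x hx y hy
  rw [pairR_comm]
  exact hy x hx

lemma convex_latticeHull (P : Set (Fin d → ℝ)) : Convex ℝ (latticeHull P) :=
  convex_convexHull ℝ _

lemma latticeHull_subset {P : Set (Fin d → ℝ)} (hP : Convex ℝ P) : latticeHull P ⊆ P :=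
  convexHull_min (fun _ hx => hx.1) hP

lemma latticeHull_mono {P Q : Set (Fin d → ℝ)} (h : P ⊆ Q) : latticeHull P ⊆ latticeHull Q :=
  convexHull_mono fun x hx => ⟨h hx.1, hx.2⟩

lemma eq_latticeHull_self {X : Set (Fin d → ℝ)} (h1 : IsLatticePolytope X) :
    X = latticeHull X := by
  obtain ⟨S, hS⟩ := h1
  apply subset_antisymm
  · intro x hx
    rw [hS] at hx
    refine convexHull_mono ?_ hx
    rintro _ ⟨s, _, rfl⟩
    exact ⟨hS ▸ subset_convexHull ℝ _ ⟨s, ‹s ∈ (S : Set (Fin d → ℤ))›, rfl⟩, isLatticePoint_toR s⟩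
  · exact latticeHull_subset (hS ▸ convex_convexHull ℝ _)

lemma subset_ff (Y : Set (Fin d → ℝ)) :
    latticeHull Y ⊆ latticeHull (polarSet (latticeHull (polarSet (latticeHull Y)))) := by
  refine convexHull_min ?_ (convex_latticeHull _)
  intro x hx
  have hx1 : x ∈ latticeHull Y := subset_convexHull ℝ _ hx
  have hx2 : x ∈ polarSet (polarSet (latticeHull Y)) := subset_bipolar _ hx1
  have h3 : latticeHull (polarSet (latticeHull Y)) ⊆ polarSet (latticeHull Y) :=
    latticeHull_subset (convex_polarSet _)
  have hx4 : x ∈ polarSet (latticeHull (polarSet (latticeHull Y))) := polar_antitone h3 hx2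
  exact subset_convexHull ℝ _ ⟨hx4, hx.2⟩

lemma goal1 {X : Set (Fin d → ℝ)} (h1 : IsLatticePolytope X) :
    latticeHull (polarSet (latticeHull (polarSet (latticeHull (polarSet X))))) =
      latticeHull (polarSet X) := by
  apply subset_antisymm
  · have h2 := subset_ff X
    rw [← eq_latticeHull_self h1] at h2
    exact latticeHull_mono (polar_antitone h2)
  · exact subset_ff (polarSet X)

/-! ### min over vertices -/

/-- minimum of the pairing over the (lattice) generators -/
def minPair (S : Finset (Fin d → ℤ)) (hSne : S.Nonempty) (y : Fin d → ℝ) : ℝ :=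
  S.inf' hSne fun s => pairR (toR s) y

lemma minPair_le {S : Finset (Fin d → ℤ)} (hSne : S.Nonempty) {s : Fin d → ℤ} (hs : s ∈ S)
    (y : Fin d → ℝ) : minPair S hSne y ≤ pairR (toR s) y :=
  Finset.inf'_le _ hs

lemma le_pair_of_mem_hull {S : Finset (Fin d → ℤ)} (hSne : S.Nonempty) {x : Fin d → ℝ}
    (hx : x ∈ convexHull ℝ (toR '' (S : Set (Fin d → ℤ)))) (y : Fin d → ℝ) :
    minPair S hSne y ≤ pairR x y := by
  have h : convexHull ℝ (toR '' (S : Set (Fin d → ℤ))) ⊆ {w | minPair S hSne y ≤ pairR w y} := by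
    refine convexHull_min ?_ (convex_halfSpace_ge (isLinearMap_pairR_left y) _)
    rintro _ ⟨s, hs, rfl⟩
    exact minPair_le hSne hs y
  exact h hx

lemma ordP_eq_minPair {S : Finset (Fin d → ℤ)} (hSne : S.Nonempty) {Δ : Set (Fin d → ℝ)}
    (hΔ : Δ = convexHull ℝ (toR '' (S : Set (Fin d → ℤ)))) (y : Fin d → ℝ) :
    ordP Δ y = minPair S hSne y := by
  obtain ⟨s₀, hs₀, hmin⟩ := Finset.exists_mem_eq_inf' hSne (fun s => pairR (toR s) y)
  have hmemΔ : toR s₀ ∈ Δ := hΔ ▸ subset_convexHull ℝ _ ⟨s₀, hs₀, rfl⟩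
  apply le_antisymm
  · apply csInf_le
    · exact ⟨minPair S hSne y, by rintro _ ⟨x, hx, rfl⟩; exact le_pair_of_mem_hull hSne (hΔ ▸ hx) y⟩
    · exact ⟨toR s₀, hmemΔ, hmin.symm⟩
  · apply le_csInf
    · exact ⟨pairR (toR s₀) y, toR s₀, hmemΔ, rfl⟩
    · rintro _ ⟨x, hx, rfl⟩
      exact le_pair_of_mem_hull hSne (hΔ ▸ hx) y

lemma mem_polar_iff_minPair {S : Finset (Fin d → ℤ)} (hSne : S.Nonempty) {Δ : Set (Fin d → ℝ)}
    (hΔ : Δ = convexHull ℝ (toR '' (S : Set (Fin d → ℤ)))) (y : Fin d → ℝ) :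
    y ∈ polarSet Δ ↔ -1 ≤ minPair S hSne y := by
  constructor
  · intro hy
    obtain ⟨s₀, hs₀, hmin⟩ := Finset.exists_mem_eq_inf' hSne (fun s => pairR (toR s) y)
    have hmemΔ : toR s₀ ∈ Δ := hΔ ▸ subset_convexHull ℝ _ ⟨s₀, hs₀, rfl⟩
    rw [minPair, hmin]
    exact hy _ hmemΔ
  · intro h x hx
    exact le_trans h (le_pair_of_mem_hull hSne (hΔ ▸ hx) y)

lemma minPair_int {S : Finset (Fin d → ℤ)} (hSne : S.Nonempty) (m : Fin d → ℤ) :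
    ∃ q : ℤ, minPair S hSne (toR m) = (q : ℝ) := by
  obtain ⟨s, _, h⟩ := Finset.exists_mem_eq_inf' hSne (fun s => pairR (toR s) (toR m))
  exact ⟨∑ i, s i * m i, h.trans (pairR_toR_toR s m)⟩

/-! ### linear functionals as pairings -/

lemma pairR_dual (f : (Fin d → ℝ) →ₗ[ℝ] ℝ) (x : Fin d → ℝ) :
    pairR x (fun i => f (fun j => if i = j then (1:ℝ) else 0)) = f x := by
  conv_rhs => rw [pi_eq_sum_univ x]
  rw [map_sum]
  simp only [LinearMap.map_smul, smul_eq_mul]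
  rfl

lemma ne_zero_of_dual {f : (Fin d → ℝ) →ₗ[ℝ] ℝ} (hf : f ≠ 0) :
    (fun i => f (fun j => if i = j then (1:ℝ) else 0)) ≠ 0 := by
  intro h0
  apply hf
  refine LinearMap.ext fun x => ?_
  have := pairR_dual f x
  rw [h0, pairR_zero_right] at this
  rw [LinearMap.zero_apply]
  exact this.symm

/-! ### separation -/

lemma sep_of_notMem_interior {X : Set (Fin d → ℝ)} (hX : Convex ℝ X) (hne : X.Nonempty)
    (h0 : (0 : Fin d → ℝ) ∉ interior X) :
    ∃ y : Fin d → ℝ, y ≠ 0 ∧ ∀ x ∈ X, 0 ≤ pairR x y := by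
  by_cases hint : (interior X).Nonempty
  · obtain ⟨w, hw⟩ := hint
    obtain ⟨f, hf⟩ := geometric_hahn_banach_open_point hX.interior isOpen_interior h0
    have hneg : ∀ a ∈ interior X, f a < 0 := by
      intro a ha
      have := hf a ha
      simpa using this
    have hfw : f w < 0 := hneg w hw
    have hle : ∀ x ∈ X, f x ≤ 0 := by
      intro x hx
      by_contra hpos'
      push_neg at hpos'
      have hden : 0 < f x - f w := by linarith
      set a : ℝ := f x / (f x - f w) with ha_def
      have ha : 0 < a := div_pos hpos' hden
      have ha1 : a ≤ 1 := by
        rw [div_le_one hden]; linarith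
      have hb : (0:ℝ) ≤ 1 - a := by linarith
      have hc := hX.combo_interior_self_mem_interior hw hx ha hb (by ring)
      have hlt := hneg _ hc
      have heval : f (a • w + (1 - a) • x) = a * f w + (1 - a) * f x := by
        rw [map_add, f.map_smul, f.map_smul, smul_eq_mul, smul_eq_mul]
      rw [heval] at hlt
      have heq : a * (f x - f w) = f x := div_mul_cancel₀ _ hden.ne'
      nlinarith
    set g : (Fin d → ℝ) →ₗ[ℝ] ℝ := -f.toLinearMap with hg_def
    have hgval : ∀ x, g x = -(f x) := fun x => rfl
    refine ⟨fun i => g (fun j => if i = j then (1:ℝ) else 0), ?_, ?_⟩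
    · apply ne_zero_of_dual
      intro h
      have : g w = 0 := by rw [h]; rfl
      rw [hgval] at this
      linarith
    · intro x hx
      rw [pairR_dual g x, hgval]
      linarith [hle x hx]
  · -- interior empty: X lies in a proper affine subspace
    have hspan : affineSpan ℝ X ≠ ⊤ := by
      intro h
      exact hint (hX.interior_nonempty_iff_affineSpan_eq_top.2 h)
    have hV : vectorSpan ℝ X < ⊤ := by
      rw [lt_top_iff_ne_top]
      intro h
      apply hspan
      rw [← AffineSubspace.direction_eq_top_iff_of_nonempty (hne.mono (subset_affineSpan ℝ X))]
      rw [direction_affineSpan]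
      exact h
    obtain ⟨f, hf0, hfbot⟩ :=
      (vectorSpan ℝ X).exists_dual_map_eq_bot_of_lt_top hV inferInstance
    have hker : ∀ v ∈ vectorSpan ℝ X, f v = 0 := by
      intro v hv
      have : f v ∈ Submodule.map f (vectorSpan ℝ X) := Submodule.mem_map_of_mem hv
      rw [hfbot] at this
      simpa using this
    obtain ⟨x₀, hx₀⟩ := hne
    have hconst : ∀ x ∈ X, f x = f x₀ := by
      intro x hx
      have hvs : x - x₀ ∈ vectorSpan ℝ X := by
        have := vsub_mem_vectorSpan ℝ hx hx₀
        simpa [vsub_eq_sub] using this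
      have := hker _ hvs
      rw [map_sub] at this
      linarith
    rcases le_or_gt 0 (f x₀) with hc | hc
    · refine ⟨fun i => f (fun j => if i = j then (1:ℝ) else 0), ne_zero_of_dual hf0, ?_⟩
      intro x hx
      rw [pairR_dual f x, hconst x hx]
      exact hc
    · have hnf : (-f : (Fin d → ℝ) →ₗ[ℝ] ℝ) ≠ 0 := neg_ne_zero.2 hf0
      refine ⟨fun i => (-f) (fun j => if i = j then (1:ℝ) else 0), ne_zero_of_dual hnf, ?_⟩
      intro x hx
      rw [pairR_dual (-f) x]
      have : (-f) x = -(f x) := rfl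
      rw [this, hconst x hx]
      linarith

/-! ### Dirichlet-type simultaneous approximation -/

lemma abs_sub_lt_one_of_floor_eq {u v : ℝ} (h : ⌊u⌋ = ⌊v⌋) : |u - v| < 1 := by
  have h1 := Int.floor_le u
  have h2 := Int.lt_floor_add_one u
  have h3 := Int.floor_le v
  have h4 := Int.lt_floor_add_one v
  rw [h] at h1 h2
  rw [abs_sub_lt_iff]
  constructor <;> linarith

lemma exists_int_approx (y : Fin d → ℝ) (M : ℕ) (hM : 0 < M) :
    ∃ (N : ℕ) (n : Fin d → ℤ), 0 < N ∧ ∀ i, |(N : ℝ) * y i - (n i : ℝ)| < 1 / M := by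
  have hMR : (0:ℝ) < M := Nat.cast_pos.2 hM
  have hFlt : ∀ (k : ℕ) (i : Fin d), (⌊Int.fract ((k : ℝ) * y i) * M⌋).toNat < M := by
    intro k i
    have h0 : (0:ℝ) ≤ Int.fract ((k : ℝ) * y i) := Int.fract_nonneg _
    have h1 : Int.fract ((k : ℝ) * y i) < 1 := Int.fract_lt_one _
    have h2 : ⌊Int.fract ((k : ℝ) * y i) * M⌋ < (M : ℤ) := by
      apply Int.floor_lt.2
      push_cast
      nlinarith
    have h3 : (0:ℤ) ≤ ⌊Int.fract ((k : ℝ) * y i) * M⌋ := Int.floor_nonneg.2 (by positivity)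
    omega
  set F : Fin (M ^ d + 1) → (Fin d → Fin M) := fun k i =>
    ⟨(⌊Int.fract (((k : ℕ) : ℝ) * y i) * M⌋).toNat, hFlt _ _⟩ with hF_def
  have hcard : Fintype.card (Fin d → Fin M) < Fintype.card (Fin (M ^ d + 1)) := by
    simp [Fintype.card_fun]
  obtain ⟨k, l, hkl, hFeq⟩ := Fintype.exists_ne_map_eq_of_card_lt F hcard
  have hvalne : (k : ℕ) ≠ (l : ℕ) := fun h => hkl (Fin.ext h)
  -- wlog k < l
  rcases Nat.lt_or_ge (k : ℕ) (l : ℕ) with hlt | hge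
  case _ =>
    refine ⟨(l : ℕ) - (k : ℕ),
      fun i => ⌊((l : ℕ) : ℝ) * y i⌋ - ⌊((k : ℕ) : ℝ) * y i⌋, by omega, ?_⟩
    intro i
    have hfl : ⌊Int.fract (((k : ℕ) : ℝ) * y i) * M⌋ = ⌊Int.fract (((l : ℕ) : ℝ) * y i) * M⌋ := by
      have h := congrFun hFeq i
      have hv := congrArg Fin.val h
      simp only [hF_def] at hv
      have h3k : (0:ℤ) ≤ ⌊Int.fract (((k : ℕ) : ℝ) * y i) * M⌋ :=
        Int.floor_nonneg.2 (mul_nonneg (Int.fract_nonneg _) hMR.le)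
      have h3l : (0:ℤ) ≤ ⌊Int.fract (((l : ℕ) : ℝ) * y i) * M⌋ :=
        Int.floor_nonneg.2 (mul_nonneg (Int.fract_nonneg _) hMR.le)
      omega
    have habs : |Int.fract (((l : ℕ) : ℝ) * y i) - Int.fract (((k : ℕ) : ℝ) * y i)| * M < 1 := by
      have h := abs_sub_lt_one_of_floor_eq hfl.symm
      calc |Int.fract (((l : ℕ) : ℝ) * y i) - Int.fract (((k : ℕ) : ℝ) * y i)| * M
          = |(Int.fract (((l : ℕ) : ℝ) * y i) - Int.fract (((k : ℕ) : ℝ) * y i)) * M| := by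
            rw [abs_mul, abs_of_pos hMR]
        _ = |Int.fract (((l : ℕ) : ℝ) * y i) * M - Int.fract (((k : ℕ) : ℝ) * y i) * M| := by
            ring_nf
        _ < 1 := h
    have hexp : ((((l : ℕ) - (k : ℕ) : ℕ)) : ℝ) * y i
        - ((⌊((l : ℕ) : ℝ) * y i⌋ - ⌊((k : ℕ) : ℝ) * y i⌋ : ℤ) : ℝ)
        = Int.fract (((l : ℕ) : ℝ) * y i) - Int.fract (((k : ℕ) : ℝ) * y i) := by
      rw [Nat.cast_sub hlt.le]
      rw [← Int.self_sub_floor, ← Int.self_sub_floor]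
      push_cast
      ring
    rw [hexp, lt_div_iff₀ hMR]
    exact habs
  case _ =>
    have hlt : (l : ℕ) < (k : ℕ) := by omega
    refine ⟨(k : ℕ) - (l : ℕ),
      fun i => ⌊((k : ℕ) : ℝ) * y i⌋ - ⌊((l : ℕ) : ℝ) * y i⌋, by omega, ?_⟩
    intro i
    have hfl : ⌊Int.fract (((l : ℕ) : ℝ) * y i) * M⌋ = ⌊Int.fract (((k : ℕ) : ℝ) * y i) * M⌋ := by
      have h := congrFun hFeq i
      have hv := congrArg Fin.val h
      simp only [hF_def] at hv
      have h3k : (0:ℤ) ≤ ⌊Int.fract (((k : ℕ) : ℝ) * y i) * M⌋ :=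
        Int.floor_nonneg.2 (mul_nonneg (Int.fract_nonneg _) hMR.le)
      have h3l : (0:ℤ) ≤ ⌊Int.fract (((l : ℕ) : ℝ) * y i) * M⌋ :=
        Int.floor_nonneg.2 (mul_nonneg (Int.fract_nonneg _) hMR.le)
      omega
    have habs : |Int.fract (((k : ℕ) : ℝ) * y i) - Int.fract (((l : ℕ) : ℝ) * y i)| * M < 1 := by
      have h := abs_sub_lt_one_of_floor_eq hfl.symm
      calc |Int.fract (((k : ℕ) : ℝ) * y i) - Int.fract (((l : ℕ) : ℝ) * y i)| * M
          = |(Int.fract (((k : ℕ) : ℝ) * y i) - Int.fract (((l : ℕ) : ℝ) * y i)) * M| := by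
            rw [abs_mul, abs_of_pos hMR]
        _ = |Int.fract (((k : ℕ) : ℝ) * y i) * M - Int.fract (((l : ℕ) : ℝ) * y i) * M| := by
            ring_nf
        _ < 1 := h
    have hexp : ((((k : ℕ) - (l : ℕ) : ℕ)) : ℝ) * y i
        - ((⌊((k : ℕ) : ℝ) * y i⌋ - ⌊((l : ℕ) : ℝ) * y i⌋ : ℤ) : ℝ)
        = Int.fract (((k : ℕ) : ℝ) * y i) - Int.fract (((l : ℕ) : ℝ) * y i) := by
      rw [Nat.cast_sub hlt.le]
      rw [← Int.self_sub_floor, ← Int.self_sub_floor]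
      push_cast
      ring
    rw [hexp, lt_div_iff₀ hMR]
    exact habs

/-! ### 0 is an interior point -/

lemma zero_mem_interior {S : Finset (Fin d → ℤ)} (hSne : S.Nonempty) {Δ : Set (Fin d → ℝ)}
    (hΔ : Δ = convexHull ℝ (toR '' (S : Set (Fin d → ℤ))))
    (hord : ∀ n : Fin d → ℤ, n ≠ 0 → ordP Δ (toR n) ≤ -1) :
    (0 : Fin d → ℝ) ∈ interior Δ := by
  by_contra h0
  have hX : Convex ℝ Δ := hΔ ▸ convex_convexHull ℝ _
  obtain ⟨s₀, hs₀⟩ := id hSne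
  have hne : Δ.Nonempty := ⟨toR s₀, hΔ ▸ subset_convexHull ℝ _ ⟨s₀, hs₀, rfl⟩⟩
  obtain ⟨y, hy0, hge⟩ := sep_of_notMem_interior hX hne h0
  obtain ⟨i₀, hi₀⟩ := Function.ne_iff.1 hy0
  have hi₀' : y i₀ ≠ 0 := by simpa using hi₀
  have habs : 0 < |y i₀| := abs_pos.2 hi₀'
  set C : ℝ := S.sup' hSne (fun s => ∑ i, |((s i : ℤ) : ℝ)|) with hC_def
  have hC0 : 0 ≤ C := by
    refine le_trans ?_ (Finset.le_sup' _ hs₀)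
    positivity
  obtain ⟨M, hM⟩ := exists_nat_gt (max C (1 / |y i₀|))
  have hMC : C < M := lt_of_le_of_lt (le_max_left _ _) hM
  have hMy : 1 / |y i₀| < M := lt_of_le_of_lt (le_max_right _ _) hM
  have hMpos : 0 < M := by
    by_contra h
    push_neg at h
    interval_cases M
    simp at hMy
    have : (0:ℝ) < 1 / |y i₀| := by positivity
    linarith
  have hMR : (0:ℝ) < M := Nat.cast_pos.2 hMpos
  obtain ⟨N, n, hN, happ⟩ := exists_int_approx y M hMpos
  have hNR : (1:ℝ) ≤ N := by exact_mod_cast hN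
  -- n ≠ 0
  have hn0 : n ≠ 0 := by
    intro h
    have h1 := happ i₀
    rw [h] at h1
    simp only [Pi.zero_apply, Int.cast_zero, sub_zero] at h1
    have h2 : |(N : ℝ) * y i₀| = (N : ℝ) * |y i₀| := by
      rw [abs_mul, abs_of_pos (by linarith : (0:ℝ) < N)]
    rw [h2] at h1
    have h3 : |y i₀| ≤ (N : ℝ) * |y i₀| := le_mul_of_one_le_left habs.le hNR
    have h4 : 1 / (M:ℝ) < |y i₀| := by
      rw [div_lt_iff₀ hMR]
      rw [div_lt_iff₀ habs] at hMy
      nlinarith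
    linarith
  -- each generator pairs nonnegatively with n
  have hkey : ∀ s ∈ S, (0:ℝ) ≤ pairR (toR s) (toR n) := by
    intro s hs
    have h1 : 0 ≤ (N : ℝ) * pairR (toR s) y := by
      apply mul_nonneg (by positivity)
      exact hge _ (hΔ ▸ subset_convexHull ℝ _ ⟨s, hs, rfl⟩)
    have hdiff : pairR (toR s) (toR n) - (N : ℝ) * pairR (toR s) y
        = ∑ i, ((s i : ℤ) : ℝ) * ((n i : ℝ) - (N : ℝ) * y i) := by
      unfold pairR toR
      rw [Finset.mul_sum, ← Finset.sum_sub_distrib]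
      congr 1
      funext i
      ring
    have hsum : |∑ i, ((s i : ℤ) : ℝ) * ((n i : ℝ) - (N : ℝ) * y i)| < 1 := by
      calc |∑ i, ((s i : ℤ) : ℝ) * ((n i : ℝ) - (N : ℝ) * y i)|
          ≤ ∑ i, |((s i : ℤ) : ℝ) * ((n i : ℝ) - (N : ℝ) * y i)| :=
            Finset.abs_sum_le_sum_abs _ _
        _ ≤ ∑ i, |((s i : ℤ) : ℝ)| * (1 / M) := by
            apply Finset.sum_le_sum
            intro i _
            rw [abs_mul]
            apply mul_le_mul_of_nonneg_left _ (abs_nonneg _)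
            have := happ i
            rw [abs_sub_comm] at this
            exact this.le
        _ = (∑ i, |((s i : ℤ) : ℝ)|) * (1 / M) := by rw [Finset.sum_mul]
        _ ≤ C * (1 / M) := by
            apply mul_le_mul_of_nonneg_right (Finset.le_sup' _ hs) (by positivity)
        _ < 1 := by
            rw [mul_one_div, div_lt_one hMR]
            exact hMC
    have h3 : (-1 : ℝ) < pairR (toR s) (toR n) := by
      have h := (abs_lt.1 hsum).1
      rw [← hdiff] at h
      linarith
    rw [pairR_toR_toR] at h3 ⊢
    have h4 : (-1 : ℤ) < ∑ i, s i * n i := by exact_mod_cast h3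
    have h5 : (0 : ℤ) ≤ ∑ i, s i * n i := by omega
    exact_mod_cast h5
  have h4 : (0:ℝ) ≤ minPair S hSne (toR n) := Finset.le_inf' hSne _ hkey
  have h5 := hord n hn0
  rw [ordP_eq_minPair hSne hΔ] at h5
  linarith

/-! ### Master lemma -/

lemma master {X : Set (Fin d → ℝ)} (h1 : IsLatticePolytope X) (hne : X.Nonempty)
    (hFI : fineInterior X = {0}) :
    IsLatticePolytope (latticeHull (polarSet X)) ∧
      fineInterior (latticeHull (polarSet X)) = {0} ∧
      (latticeHull (polarSet X)).Nonempty := by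
  obtain ⟨S, hS⟩ := h1
  have hSne : S.Nonempty := by
    rcases S.eq_empty_or_nonempty with h | h
    · exfalso
      rw [h] at hS
      simp only [Finset.coe_empty, Set.image_empty, convexHull_empty] at hS
      exact hne.ne_empty hS
    · exact h
  have hXconv : Convex ℝ X := hS ▸ convex_convexHull ℝ _
  have h0FI : (0 : Fin d → ℝ) ∈ fineInterior X := by rw [hFI]; rfl
  have hord : ∀ n : Fin d → ℤ, n ≠ 0 → ordP X (toR n) ≤ -1 := by
    intro n hn
    have := h0FI n hn
    rw [pairR_zero_left] at this
    linarith
  have hint : (0 : Fin d → ℝ) ∈ interior X := zero_mem_interior hSne hS hord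
  obtain ⟨ε, hε, hball⟩ : ∃ ε > 0, Metric.ball (0 : Fin d → ℝ) ε ⊆ X := by
    rw [mem_interior_iff_mem_nhds] at hint
    exact Metric.mem_nhds_iff.mp hint
  -- small coordinate vectors are in X
  have hcoord : ∀ (i : Fin d) (c : ℝ), |c| < ε → (fun j => if i = j then c else 0) ∈ X := by
    intro i c hc
    apply hball
    rw [mem_ball_zero_iff]
    rw [pi_norm_lt_iff hε]
    intro j
    rcases eq_or_ne i j with rfl | hij
    · simpa using hc
    · simpa [hij] using hε
  have hpair_coord : ∀ (i : Fin d) (c : ℝ) (y : Fin d → ℝ),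
      pairR (fun j => if i = j then c else 0) y = c * y i := by
    intro i c y
    unfold pairR
    rw [Finset.sum_eq_single i]
    · simp
    · intro j _ hj
      simp [Ne.symm hj]
    · intro h
      exact absurd (Finset.mem_univ i) h
  -- bound on the polar
  have hbox : ∀ y ∈ polarSet X, ∀ i, |y i| ≤ 2 / ε := by
    intro y hy i
    have hε2 : |ε / 2| < ε := by
      rw [abs_of_pos (by linarith)]
      linarith
    have hε2' : |-(ε / 2)| < ε := by
      rw [abs_neg]
      exact hε2
    have h1 := hy _ (hcoord i (ε / 2) hε2)
    have h2 := hy _ (hcoord i (-(ε / 2)) hε2')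
    rw [hpair_coord] at h1 h2
    rw [abs_le]
    constructor
    · rw [neg_le, le_div_iff₀ hε]
      nlinarith
    · rw [le_div_iff₀ hε]
      nlinarith
  -- finiteness of lattice points of the polar
  set B : ℤ := ⌈2 / ε⌉ with hB_def
  have hfin : {n : Fin d → ℤ | toR n ∈ polarSet X}.Finite := by
    apply Set.Finite.subset (Set.Finite.pi (fun _ : Fin d => Set.finite_Icc (-B) B))
    intro n hn
    rw [Set.mem_pi]
    intro i _
    rw [Set.mem_Icc]
    have h1 : |((n i : ℤ) : ℝ)| ≤ 2 / ε := hbox _ hn i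
    have h2 : ((|n i| : ℤ) : ℝ) ≤ (B : ℝ) := by
      rw [Int.cast_abs]
      exact le_trans h1 (Int.le_ceil _)
    have h3 : |n i| ≤ B := by exact_mod_cast h2
    exact abs_le.1 h3
  set T : Finset (Fin d → ℤ) := hfin.toFinset with hT_def
  have hTset : {x ∈ polarSet X | IsLatticePoint x} = toR '' (T : Set (Fin d → ℤ)) := by
    ext x
    constructor
    · rintro ⟨hxP, hxL⟩
      obtain ⟨n, rfl⟩ := isLatticePoint_iff.mp hxL
      exact ⟨n, by rwa [hT_def, Finset.mem_coe, Set.Finite.mem_toFinset], rfl⟩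
    · rintro ⟨n, hn, rfl⟩
      rw [hT_def, Finset.mem_coe, Set.Finite.mem_toFinset] at hn
      exact ⟨hn, isLatticePoint_toR n⟩
  have hQpoly : IsLatticePolytope (latticeHull (polarSet X)) := ⟨T, by rw [latticeHull, hTset]⟩
  -- basic membership facts
  have h0P : (0 : Fin d → ℝ) ∈ polarSet X := by
    intro x hx
    rw [pairR_zero_right]
    norm_num
  have h0Q : (0 : Fin d → ℝ) ∈ latticeHull (polarSet X) :=
    subset_convexHull ℝ _ ⟨h0P, isLatticePoint_zero⟩
  have hQsub : latticeHull (polarSet X) ⊆ polarSet X := latticeHull_subset (convex_polarSet X)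
  have hbdd : ∀ v : Fin d → ℝ,
      BddBelow ((fun x => pairR x v) '' latticeHull (polarSet X)) := by
    intro v
    refine ⟨-((2 / ε) * ∑ i, |v i|), ?_⟩
    rintro _ ⟨x, hx, rfl⟩
    have hx' := hQsub hx
    have h1 : |pairR x v| ≤ (2 / ε) * ∑ i, |v i| := by
      calc |pairR x v| ≤ ∑ i, |x i * v i| := Finset.abs_sum_le_sum_abs _ _
        _ ≤ ∑ i, (2 / ε) * |v i| := by
            apply Finset.sum_le_sum
            intro i _
            rw [abs_mul]
            exact mul_le_mul_of_nonneg_right (hbox x hx' i) (abs_nonneg _)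
        _ = (2 / ε) * ∑ i, |v i| := by rw [Finset.mul_sum]
    linarith [neg_abs_le (pairR x v), h1]
  -- 0 belongs to the Fine interior of the lattice hull of the polar
  have h0FIQ : (0 : Fin d → ℝ) ∈ fineInterior (latticeHull (polarSet X)) := by
    intro n hn
    rw [pairR_zero_left]
    have hy : ∃ m : Fin d → ℤ, toR m ∈ polarSet X ∧ pairR (toR m) (toR n) ≤ -1 := by
      by_contra hcon
      push_neg at hcon
      have hcon' : ∀ m : Fin d → ℤ, toR m ∈ polarSet X → 0 ≤ pairR (toR m) (toR n) := by
        intro m hm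
        have h1 := hcon m hm
        rw [pairR_toR_toR] at h1 ⊢
        have h2 : (-1 : ℤ) < ∑ i, m i * n i := by exact_mod_cast h1
        have h3 : (0 : ℤ) ≤ ∑ i, m i * n i := by omega
        exact_mod_cast h3
      set c : ℝ := (‖toR n‖ + 1) / ε with hc_def
      have hcpos : 0 < c := by positivity
      have hzX : (1 / c) • toR n ∈ X := by
        apply hball
        have h1c : 1 / c * ‖toR n‖ < ε := by
          rw [hc_def, one_div_div, div_mul_eq_mul_div,
            div_lt_iff₀ (by positivity : (0:ℝ) < ‖toR n‖ + 1)]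
          nlinarith [norm_nonneg (toR n)]
        rw [mem_ball_zero_iff, norm_smul, Real.norm_eq_abs,
          abs_of_pos (one_div_pos.2 hcpos)]
        exact h1c
      set t : ℝ := 1 / (2 * c) with ht_def
      have htpos : 0 < t := by positivity
      have hFIt : t • toR n ∈ fineInterior X := by
        intro m hm
        obtain ⟨q, hq⟩ := minPair_int hSne m
        have hqle : (q : ℝ) ≤ -1 := by
          rw [← hq, ← ordP_eq_minPair hSne hS]
          exact hord m hm
        have hq1 : q ≤ -1 := by exact_mod_cast hqle
        rw [ordP_eq_minPair hSne hS, hq, pairR_smul_left]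
        rcases eq_or_lt_of_le hq1 with hq2 | hq2
        · -- q = -1 : toR m lies in the polar of X
          have hmP : toR m ∈ polarSet X := by
            rw [mem_polar_iff_minPair hSne hS, hq, hq2]
            norm_num
          have h6 := hcon' m hmP
          rw [hq2]
          have h7 : 0 ≤ t * pairR (toR n) (toR m) := by
            apply mul_nonneg htpos.le
            rw [pairR_comm]
            exact h6
          push_cast
          linarith
        · have hq2' : q ≤ -2 := by omega
          have h5 : c * (q : ℝ) ≤ pairR (toR n) (toR m) := by
            have h6 := le_pair_of_mem_hull hSne (hS ▸ hzX) (toR m)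
            rw [pairR_smul_left, hq] at h6
            have h7 : c * (q : ℝ) ≤ c * (1 / c * pairR (toR n) (toR m)) :=
              mul_le_mul_of_nonneg_left h6 hcpos.le
            calc c * (q : ℝ) ≤ c * (1 / c * pairR (toR n) (toR m)) := h7
              _ = pairR (toR n) (toR m) := by field_simp
          have h8 : t * (c * (q : ℝ)) ≤ t * pairR (toR n) (toR m) :=
            mul_le_mul_of_nonneg_left h5 htpos.le
          have htc : t * c = 1 / 2 := by
            rw [ht_def]
            field_simp
            try ring
          have h9 : t * (c * (q : ℝ)) = (1 / 2) * q := by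
            rw [← mul_assoc, htc]
          rw [h9] at h8
          have hq2R : (q : ℝ) ≤ -2 := by exact_mod_cast hq2'
          linarith
      rw [hFI] at hFIt
      have hzero : t • toR n = 0 := hFIt
      have : toR n = 0 := by
        rcases smul_eq_zero.1 hzero with h | h
        · exact absurd h htpos.ne'
        · exact h
      exact hn (toR_eq_zero_iff.1 this)
    obtain ⟨m, hmP, hmle⟩ := hy
    have h7 : ordP (latticeHull (polarSet X)) (toR n) ≤ pairR (toR m) (toR n) :=
      csInf_le (hbdd _) ⟨toR m, subset_convexHull ℝ _ ⟨hmP, isLatticePoint_toR m⟩, rfl⟩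
    linarith
  -- the Fine interior of the lattice hull of the polar is exactly {0}
  have hFIQ : fineInterior (latticeHull (polarSet X)) = {0} := by
    apply Set.eq_singleton_iff_unique_mem.2
    refine ⟨h0FIQ, ?_⟩
    intro x hx
    have hkey : ∀ s ∈ S, (0:ℝ) ≤ pairR x (toR s) := by
      intro s hs
      by_cases hs0 : s = 0
      · rw [hs0, toR_zero, pairR_zero_right]
      · have h8 := hx s hs0
        have h9 : (-1 : ℝ) ≤ ordP (latticeHull (polarSet X)) (toR s) := by
          apply le_csInf
          · exact ⟨pairR 0 (toR s), 0, h0Q, rfl⟩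
          · rintro _ ⟨z, hz, rfl⟩
            have hzP := hQsub hz
            have h10 := hzP (toR s) (hS ▸ subset_convexHull ℝ _ ⟨s, hs, rfl⟩)
            rwa [pairR_comm] at h10
        linarith
    have hX0 : ∀ z ∈ X, 0 ≤ pairR x z := by
      intro z hz
      rw [hS] at hz
      refine convexHull_min ?_ (convex_halfSpace_ge (isLinearMap_pairR_right x) 0) hz
      rintro _ ⟨s, hsS, rfl⟩
      exact hkey s hsS
    by_contra hx0
    have hxx : 0 < pairR x x := by
      unfold pairR
      apply Finset.sum_pos'
      · intro i _
        exact mul_self_nonneg _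
      · obtain ⟨i, hi⟩ := Function.ne_iff.1 hx0
        refine ⟨i, Finset.mem_univ i, ?_⟩
        have : x i ≠ 0 := by simpa using hi
        exact mul_self_pos.2 this
    have hnx : 0 < ‖x‖ := norm_pos_iff.2 hx0
    set z : Fin d → ℝ := (-(ε / 2) / ‖x‖) • x with hz_def
    have hz : z ∈ X := by
      apply hball
      rw [mem_ball_zero_iff, hz_def, norm_smul]
      have : ‖-(ε / 2) / ‖x‖‖ = (ε / 2) / ‖x‖ := by
        rw [norm_div, norm_neg]
        rw [Real.norm_of_nonneg (by linarith : (0:ℝ) ≤ ε / 2)]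
        rw [Real.norm_of_nonneg hnx.le]
      rw [this]
      rw [div_mul_cancel₀ _ hnx.ne']
      linarith
    have h11 := hX0 z hz
    rw [hz_def, pairR_smul_right] at h11
    have hcneg : -(ε / 2) / ‖x‖ < 0 := div_neg_of_neg_of_pos (by linarith) hnx
    have h12 : -(ε / 2) / ‖x‖ * pairR x x < 0 := mul_neg_of_neg_of_pos hcneg hxx
    linarith
  exact ⟨hQpoly, hFIQ, ⟨0, h0Q⟩⟩

end Aux

/-- if Δ^{FI} = {0} then [[[Δ*]*]*] = [Δ*]; consequently both [Δ*]
and [[Δ*]*] are pseudoreflexive. -/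
theorem stmt6 {d : ℕ} (Δ : Set (Fin d → ℝ)) (h1 : IsLatticePolytope Δ)
    (h2 : (interior Δ).Nonempty) (hFI : fineInterior Δ = {0}) :
    latticeHull (polarSet (latticeHull (polarSet (latticeHull (polarSet Δ))))) =
        latticeHull (polarSet Δ) ∧
      IsPseudoreflexive (latticeHull (polarSet Δ)) ∧
      IsPseudoreflexive (latticeHull (polarSet (latticeHull (polarSet Δ)))) := by
  have hne : Δ.Nonempty := h2.mono interior_subset
  have m1 := master h1 hne hFI
  have m2 := master m1.1 m1.2.2 m1.2.1
  have g1 := goal1 h1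
  refine ⟨g1, ⟨m1.1, m1.2.1, g1.symm⟩, ⟨m2.1, m2.2.1, ?_⟩⟩
  conv_rhs => rw [g1]


end
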